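/- Let F : ℝ⁵ → ℝ⁷ be the map F(τ_L, θ, ω, x, y) = (0, ω, g(θ, x, y) − τ_L, u₁ − R x, u₂ − R y, x, y), where g : ℝ³ → ℝ is continuously differentiable, R > 0, and u₁, u₂ are constants. Then at every point the rank of the Jacobian of F is exactly 4; in particular it is strictly less than 5, so F is nowhere an immersion. -/

import Mathlib

/-!
The map factors through `ℝ⁴` as `F = G ∘ P`, where `P(τ_L, θ, ω, x, y) = (g(θ, x, y) − τ_L, ω, x, y)`
and `G(s, ω, x, y) = (0, ω, s, u₁ − R x, u₂ − R y, x, y)`. The map `G` has the linear left inverse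
`z ↦ (z₂, z₁, z₅, z₆)`, and `P` has a differentiable right inverse obtained by freezing `θ` and solving
for `τ_L`. By the chain rule `DG` is injective and `DP` surjective, so `DF = DG ∘ DP` has rank `4`:
to first order a change of `θ` is indistinguishable from a change of the load torque.
-/

open Function

section Calculus

variable {𝕜 : Type*} [NontriviallyNormedField 𝕜] {E F : Type*} [NormedAddCommGroup E]
  [NormedSpace 𝕜 E] [NormedAddCommGroup F] [NormedSpace 𝕜 F]

@[fun_prop]
theorem DifferentiableAt.vecCons {n : ℕ} {x : E} {f : E → F} {fs : E → Fin n → F}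
    (hf : DifferentiableAt 𝕜 f x) (hfs : DifferentiableAt 𝕜 fs x) :
    DifferentiableAt 𝕜 (fun y => Matrix.vecCons (f y) (fs y)) x :=
  hf.finCons hfs

theorem Function.LeftInverse.leftInverse_fderiv {f : E → F} {r : F → E} {x : E}
    (h : LeftInverse r f) (hr : DifferentiableAt 𝕜 r (f x)) (hf : DifferentiableAt 𝕜 f x) :
    LeftInverse (fderiv 𝕜 r (f x)) (fderiv 𝕜 f x) := by
  have hcomp : (fderiv 𝕜 r (f x)).comp (fderiv 𝕜 f x) = ContinuousLinearMap.id 𝕜 E := by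
    rw [← fderiv_comp x hr hf, h.comp_eq_id, fderiv_id]
  exact fun v => congr($hcomp v)

end Calculus

theorem LinearMap.rank_toMatrix'_comp_of_injective_of_surjective {K : Type*} [Field K]
    {l m n : Type*} [Fintype m] [Fintype n] [DecidableEq m]
    (A : (n → K) →ₗ[K] l → K) (B : (m → K) →ₗ[K] n → K)
    (hA : Injective A) (hB : Surjective B) :
    (LinearMap.toMatrix' (A ∘ₗ B)).rank = Fintype.card n := by
  rw [Matrix.rank, ← Matrix.toLin'_apply', Matrix.toLin'_toMatrix',
    LinearMap.range_comp_of_range_eq_top A (LinearMap.range_eq_top.2 hB),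
    LinearMap.finrank_range_of_inj hA, Module.finrank_fintype_fun_eq_card]

def torqueCoords (g : ℝ × ℝ × ℝ → ℝ) (X : Fin 5 → ℝ) : Fin 4 → ℝ :=
  ![g (X 1, X 3, X 4) - X 0, X 2, X 3, X 4]

def outputOfTorqueCoords (R u₁ u₂ : ℝ) (w : Fin 4 → ℝ) : Fin 7 → ℝ :=
  ![0, w 1, w 0, u₁ - R * w 2, u₂ - R * w 3, w 2, w 3]

theorem differentiable_torqueCoords {g : ℝ × ℝ × ℝ → ℝ} (hg : Differentiable ℝ g) :
    Differentiable ℝ (torqueCoords g) :=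
  fun _ => by unfold torqueCoords; fun_prop

theorem differentiable_outputOfTorqueCoords (R u₁ u₂ : ℝ) :
    Differentiable ℝ (outputOfTorqueCoords R u₁ u₂) :=
  fun _ => by unfold outputOfTorqueCoords; fun_prop

theorem injective_fderiv_outputOfTorqueCoords (R u₁ u₂ : ℝ) (w : Fin 4 → ℝ) :
    Injective (fderiv ℝ (outputOfTorqueCoords R u₁ u₂) w) := by
  have hleft : LeftInverse (fun z : Fin 7 → ℝ => ![z 2, z 1, z 5, z 6])
      (outputOfTorqueCoords R u₁ u₂) := fun w => by
    ext i; fin_cases i <;> rfl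
  exact (hleft.leftInverse_fderiv (by fun_prop)
    (differentiable_outputOfTorqueCoords R u₁ u₂ w)).injective

theorem surjective_fderiv_torqueCoords {g : ℝ × ℝ × ℝ → ℝ} (hg : Differentiable ℝ g)
    (X : Fin 5 → ℝ) : Surjective (fderiv ℝ (torqueCoords g) X) := by
  let lift : (Fin 4 → ℝ) → Fin 5 → ℝ := fun w => ![g (X 1, w 2, w 3) - w 0, X 1, w 1, w 2, w 3]
  have hsection : LeftInverse (torqueCoords g) lift := fun w => by
    ext i; fin_cases i <;> simp [lift, torqueCoords]
  have hlift : lift (torqueCoords g X) = X := by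
    ext i; fin_cases i <;> simp [lift, torqueCoords]
  have hsurj := (hsection.leftInverse_fderiv (differentiable_torqueCoords hg _)
    (by fun_prop : DifferentiableAt ℝ lift (torqueCoords g X))).surjective
  rwa [hlift] at hsurj

theorem stmt15_general (g : ℝ × ℝ × ℝ → ℝ) (hg : ContDiff ℝ 1 g)
    (R u₁ u₂ : ℝ) (X : Fin 5 → ℝ) :
    Matrix.rank (LinearMap.toMatrix'
        (fderiv ℝ (fun X : Fin 5 → ℝ =>
          (![0, X 2, g (X 1, X 3, X 4) - X 0, u₁ - R * X 3, u₂ - R * X 4, X 3, X 4] :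
            Fin 7 → ℝ)) X).toLinearMap) = 4
    ∧
    Matrix.rank (LinearMap.toMatrix'
        (fderiv ℝ (fun X : Fin 5 → ℝ =>
          (![0, X 2, g (X 1, X 3, X 4) - X 0, u₁ - R * X 3, u₂ - R * X 4, X 3, X 4] :
            Fin 7 → ℝ)) X).toLinearMap) < 5 := by
  suffices hrank : (LinearMap.toMatrix' (fderiv ℝ
      (outputOfTorqueCoords R u₁ u₂ ∘ torqueCoords g) X).toLinearMap).rank = 4 from
    ⟨hrank, hrank.trans_lt (by norm_num)⟩
  have hgd : Differentiable ℝ g := hg.differentiable one_ne_zero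
  rw [fderiv_comp X (differentiable_outputOfTorqueCoords R u₁ u₂ _)
      (differentiable_torqueCoords hgd X), ContinuousLinearMap.toLinearMap_comp]
  exact LinearMap.rank_toMatrix'_comp_of_injective_of_surjective _ _
    (injective_fderiv_outputOfTorqueCoords R u₁ u₂ _) (surjective_fderiv_torqueCoords hgd X)

/-- the steady-state/output map of the sensorless
permanent-magnet machine,
`F(τ_L, θ, ω, x, y) = (0, ω, g(θ,x,y) − τ_L, u₁ − Rx, u₂ − Ry, x, y)`,
has Jacobian of rank exactly 4 at every point; in particular its rank is < 5,
so F is nowhere an immersion. -/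
theorem stmt15 (g : ℝ × ℝ × ℝ → ℝ) (hg : ContDiff ℝ 1 g)
    (R u₁ u₂ : ℝ) (hR : 0 < R) (X : Fin 5 → ℝ) :
    Matrix.rank (LinearMap.toMatrix'
        (fderiv ℝ (fun X : Fin 5 → ℝ =>
          (![0, X 2, g (X 1, X 3, X 4) - X 0, u₁ - R * X 3, u₂ - R * X 4, X 3, X 4] :
            Fin 7 → ℝ)) X).toLinearMap) = 4
    ∧
    Matrix.rank (LinearMap.toMatrix'
        (fderiv ℝ (fun X : Fin 5 → ℝ =>
          (![0, X 2, g (X 1, X 3, X 4) - X 0, u₁ - R * X 3, u₂ - R * X 4, X 3, X 4] :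
            Fin 7 → ℝ)) X).toLinearMap) < 5 :=
  stmt15_general g hg R u₁ u₂ X
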